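/- Let (Ω, μ) be a probability space and let H, G : Ω → ℝ be nonnegative measurable functions with G > 0 almost everywhere, such that ω ↦ log(1 + H(ω)/G(ω)) is integrable. Let P₂, Q₂, σ² : ℝ → ℝ be functions with P₂(P) > 0, Q₂(P) ≥ 0 and σ²(P) ≥ 0 for all P, such that P₂(P) tends to infinity, Q₂(P) tends to 0, and σ²(P)·P₂(P) tends to 0 as P tends to infinity. Then the function P ↦ ∫ log(1 + P₂(P)·H/((1 + Q₂(P))·(1 + P₂(P)·G))) dμ − log(1 + σ²(P)·P₂(P)/(1 + Q₂(P))) tends to ∫ log(1 + H/G) dμ as P tends to infinity. -/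

import Mathlib

/-!
Dividing numerator and denominator by `P₂` writes the integrand as
`log (1 + H / ((1 + Q₂) (P₂⁻¹ + G)))`, which tends pointwise to `log (1 + H / G)` and, since
`Q₂ ≥ 0`, is dominated by it; dominated convergence handles the integral. The correction term
`log (1 + σ² P₂ / (1 + Q₂))` tends to `log 1 = 0`.
-/

open Filter MeasureTheory Topology

lemma mul_div_one_add_mul_le_div {p q h g : ℝ} (hp : 0 ≤ p) (hq : 0 ≤ q) (hh : 0 ≤ h)
    (hg : 0 < g) : p * h / ((1 + q) * (1 + p * g)) ≤ h / g := by
  rw [div_le_div_iff₀ (by positivity) hg]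
  nlinarith [mul_nonneg hh hq, mul_nonneg (mul_nonneg hh hq) (mul_nonneg hp hg.le),
    mul_nonneg hh (mul_nonneg hp hg.le)]

section Tendsto

variable {α : Type*} {l : Filter α}

lemma Filter.Tendsto.log_one_add_of_tendsto_zero {f : α → ℝ} (hf : Tendsto f l (𝓝 0)) :
    Tendsto (fun x => Real.log (1 + f x)) l (𝓝 0) := by
  have hf1 : Tendsto (fun x => 1 + f x) l (𝓝 1) := by simpa using hf.const_add 1
  simpa [Function.comp_def] using (Real.continuousAt_log one_ne_zero).tendsto.comp hf1

lemma tendsto_mul_div_one_add_mul {p q : α → ℝ} (hp : Tendsto p l atTop)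
    (hq : Tendsto q l (𝓝 0)) (h : ℝ) {g : ℝ} (hg : g ≠ 0) :
    Tendsto (fun x => p x * h / ((1 + q x) * (1 + p x * g))) l (𝓝 (h / g)) := by
  have hden : Tendsto (fun x => (1 + q x) * ((p x)⁻¹ + g)) l (𝓝 g) := by
    simpa using (hq.const_add 1).mul (hp.inv_tendsto_atTop.add_const g)
  refine (tendsto_const_nhds.div hden hg).congr' ?_
  filter_upwards [hp.eventually_ne_atTop 0] with x hx
  simp only [Pi.div_apply]
  field_simp

end Tendsto

theorem tendsto_integral_log_one_add_mul_div {Ω α : Type*} [MeasurableSpace Ω] (μ : Measure Ω)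
    {l : Filter α} [l.IsCountablyGenerated] {H G : Ω → ℝ} (hHm : Measurable H)
    (hGm : Measurable G) (hH : ∀ ω, 0 ≤ H ω) (hG : ∀ᵐ ω ∂μ, 0 < G ω)
    (hint : Integrable (fun ω => Real.log (1 + H ω / G ω)) μ) {p q : α → ℝ}
    (hp : ∀ x, 0 < p x) (hq : ∀ x, 0 ≤ q x) (hp_lim : Tendsto p l atTop)
    (hq_lim : Tendsto q l (𝓝 0)) :
    Tendsto (fun x => ∫ ω, Real.log (1 + p x * H ω / ((1 + q x) * (1 + p x * G ω))) ∂μ) l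
      (𝓝 (∫ ω, Real.log (1 + H ω / G ω) ∂μ)) := by
  refine tendsto_integral_filter_of_dominated_convergence _
    (Eventually.of_forall fun x => ?_) (Eventually.of_forall fun x => ?_) hint ?_
  · exact Measurable.aestronglyMeasurable (by fun_prop)
  · filter_upwards [hG] with ω hGω
    have hnonneg : 0 ≤ p x * H ω / ((1 + q x) * (1 + p x * G ω)) := by
      have := hp x; have := hq x; have := hH ω; positivity
    rw [Real.norm_of_nonneg (Real.log_nonneg (by linarith))]
    exact Real.log_le_log (by linarith) (by
      linarith [mul_div_one_add_mul_le_div (hp x).le (hq x) (hH ω) hGω])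
  · filter_upwards [hG] with ω hGω
    have hpos : 0 < 1 + H ω / G ω := by have := div_nonneg (hH ω) hGω.le; linarith
    exact ((Real.continuousAt_log hpos.ne').tendsto.comp
      ((tendsto_mul_div_one_add_mul hp_lim hq_lim (H ω) hGω.ne').const_add 1))

open Filter MeasureTheory in
theorem tendsto_R_AB_noDiscussion_atTop_general
    {Ω : Type*} [MeasurableSpace Ω] (μ : Measure Ω)
    (H G : Ω → ℝ) (hHm : Measurable H) (hGm : Measurable G)
    (hH : ∀ ω, 0 ≤ H ω) (hG : ∀ᵐ ω ∂μ, 0 < G ω)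
    (hint : Integrable (fun ω => Real.log (1 + H ω / G ω)) μ)
    (P₂ Q₂ σsq : ℝ → ℝ)
    (hP₂ : ∀ P, 0 < P₂ P) (hQ₂ : ∀ P, 0 ≤ Q₂ P)
    (hP₂lim : Tendsto P₂ atTop atTop)
    (hQ₂lim : Tendsto Q₂ atTop (nhds 0))
    (hσP₂lim : Tendsto (fun P => σsq P * P₂ P) atTop (nhds 0)) :
    Tendsto (fun P : ℝ =>
        (∫ ω, Real.log (1 + P₂ P * H ω / ((1 + Q₂ P) * (1 + P₂ P * G ω))) ∂μ) -
          Real.log (1 + σsq P * P₂ P / (1 + Q₂ P)))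
      atTop (nhds (∫ ω, Real.log (1 + H ω / G ω) ∂μ)) := by
  have hrate := tendsto_integral_log_one_add_mul_div μ hHm hGm hH hG hint hP₂ hQ₂ hP₂lim hQ₂lim
  have hratio : Tendsto (fun P => σsq P * P₂ P / (1 + Q₂ P)) atTop (𝓝 0) := by
    simpa [Pi.div_def] using hσP₂lim.div (hQ₂lim.const_add 1) (by norm_num)
  have hcorrection := hratio.log_one_add_of_tendsto_zero
  simpa using hrate.sub hcorrection

open Filter MeasureTheory in
/-- Limit (133): the no-discussion rate term
`∫ log (1 + P₂H/((1+Q₂)(1+P₂G))) dμ − log (1 + σ²P₂/(1+Q₂))` tends to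
`∫ log (1 + H/G) dμ` as `P → ∞`, when `P₂ → ∞`, `Q₂ → 0` and `σ²·P₂ → 0`. -/
theorem tendsto_R_AB_noDiscussion_atTop
    {Ω : Type*} [MeasurableSpace Ω] (μ : Measure Ω) [IsProbabilityMeasure μ]
    (H G : Ω → ℝ) (hHm : Measurable H) (hGm : Measurable G)
    (hH : ∀ ω, 0 ≤ H ω) (hG : ∀ᵐ ω ∂μ, 0 < G ω)
    (hint : Integrable (fun ω => Real.log (1 + H ω / G ω)) μ)
    (P₂ Q₂ σsq : ℝ → ℝ)
    (hP₂ : ∀ P, 0 < P₂ P) (hQ₂ : ∀ P, 0 ≤ Q₂ P) (hσsq : ∀ P, 0 ≤ σsq P)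
    (hP₂lim : Tendsto P₂ atTop atTop)
    (hQ₂lim : Tendsto Q₂ atTop (nhds 0))
    (hσP₂lim : Tendsto (fun P => σsq P * P₂ P) atTop (nhds 0)) :
    Tendsto (fun P : ℝ =>
        (∫ ω, Real.log (1 + P₂ P * H ω / ((1 + Q₂ P) * (1 + P₂ P * G ω))) ∂μ) -
          Real.log (1 + σsq P * P₂ P / (1 + Q₂ P)))
      atTop (nhds (∫ ω, Real.log (1 + H ω / G ω) ∂μ)) :=
  tendsto_R_AB_noDiscussion_atTop_general μ H G hHm hGm hH hG hint P₂ Q₂ σsq hP₂ hQ₂ hP₂lim hQ₂lim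
    hσP₂lim
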